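/- Force formula for the quadratic discrete potential. Let n ≥ 1, A_0, …, A_n ∈ ℝ, N ∈ ℕ, ε > 0, and on the periodic lattice ℤ/N define U(u) = Σ_{i ∈ ℤ/N} ε (1/2) Σ_{α=0}^n A_α |(D_ε^α u)_i|² for u : ℤ/N → ℝ. Then the force on particle i satisfies F_i := −(1/ε) ∂U/∂u_i = − Σ_{k=0}^n (−1)^k A_k (Δ_ε^k u)_i. -/

import Mathlib

/-! `Upot` is the quadratic form `u ↦ (ε/2) Σ_α A_α ⟨D^α u, D^α u⟩`, so its derivative along the
`i`-th coordinate is `ε Σ_α A_α ⟨D^α u, D^α e_i⟩`. Periodic summation by parts gives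
`⟨D⁺v, D⁺w⟩ = -⟨Δv, w⟩` and makes `Δ` self-adjoint, hence `⟨D^α v, D^α w⟩ = (-1)^α ⟨Δ^α v, w⟩`
for every `α`; pairing with `e_i` reads off `(Δ^α u)_i`. -/

open Finset

noncomputable section

/-- Discrete Laplacian on the periodic lattice `ℤ/N`:
`(Δ_ε u)_i = ε⁻² (u_{i+1} + u_{i-1} - 2 u_i)`. -/
def latLap (ε : ℝ) {N : ℕ} (v : ZMod N → ℝ) : ZMod N → ℝ :=
  fun i => (v (i + 1) + v (i - 1) - 2 * v i) / ε ^ 2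

/-- Right discrete derivative on the periodic lattice: `(D⁺_ε u)_i = (u_{i+1} - u_i)/ε`. -/
def latDplus (ε : ℝ) {N : ℕ} (v : ZMod N → ℝ) : ZMod N → ℝ :=
  fun i => (v (i + 1) - v i) / ε

/-- The `α`-th discrete derivative on the lattice: `D_ε^α = Δ_ε^{α/2}` for `α` even
and `D_ε^α = D⁺_ε Δ_ε^{(α-1)/2}` for `α` odd. -/
def latD (ε : ℝ) {N : ℕ} (α : ℕ) (v : ZMod N → ℝ) : ZMod N → ℝ :=
  if α % 2 = 0 then (latLap ε)^[α / 2] v else latDplus ε ((latLap ε)^[α / 2] v)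

/-- The quadratic discrete potential
`U(u) = Σ_i ε (1/2) Σ_{α=0}^n A_α |(D_ε^α u)_i|²`. -/
def Upot (n : ℕ) (A : ℕ → ℝ) (ε : ℝ) {N : ℕ} [NeZero N] (u : ZMod N → ℝ) : ℝ :=
  ∑ i : ZMod N, ε * ((1 / 2) * ∑ α ∈ Finset.range (n + 1), A α * (latD ε α u i) ^ 2)

section Lattice

variable {N : ℕ} (ε : ℝ)

def latLapₗ : Module.End ℝ (ZMod N → ℝ) where
  toFun := latLap ε
  map_add' v w := by ext j; simp only [latLap, Pi.add_apply]; ring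
  map_smul' c v := by ext j; simp only [latLap, Pi.smul_apply, smul_eq_mul, RingHom.id_apply]; ring

def latDplusₗ : Module.End ℝ (ZMod N → ℝ) where
  toFun := latDplus ε
  map_add' v w := by ext j; simp only [latDplus, Pi.add_apply]; ring
  map_smul' c v := by
    ext j; simp only [latDplus, Pi.smul_apply, smul_eq_mul, RingHom.id_apply]; ring

def latDₗ (α : ℕ) : Module.End ℝ (ZMod N → ℝ) :=
  if α % 2 = 0 then latLapₗ ε ^ (α / 2) else latDplusₗ ε * latLapₗ ε ^ (α / 2)

@[simp]
lemma coe_latDₗ (α : ℕ) : ⇑(latDₗ (N := N) ε α) = latD ε α := by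
  ext v : 1
  unfold latDₗ latD
  split_ifs <;> simp [Module.End.coe_pow, latLapₗ, latDplusₗ]

lemma latD_two_mul (m : ℕ) (v : ZMod N → ℝ) : latD ε (2 * m) v = (latLap ε)^[m] v := by
  simp [latD]

lemma latD_two_mul_add_one (m : ℕ) (v : ZMod N → ℝ) :
    latD ε (2 * m + 1) v = latDplus ε ((latLap ε)^[m] v) := by
  simp [latD, Nat.add_mod, Nat.add_div]

end Lattice

section SummationByParts

variable {N : ℕ} [NeZero N] (ε : ℝ)

lemma sum_comp_add_one_mul (v w : ZMod N → ℝ) :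
    ∑ j, v (j + 1) * w j = ∑ j, v j * w (j - 1) := by
  simpa using ((Equiv.subRight (1 : ZMod N)).sum_comp fun j => v (j + 1) * w j).symm

lemma sum_comp_sub_one_mul (v w : ZMod N → ℝ) :
    ∑ j, v (j - 1) * w j = ∑ j, v j * w (j + 1) := by
  simpa using (Equiv.sum_comp (Equiv.addRight (1 : ZMod N)) fun j => v (j - 1) * w j).symm

lemma sum_comp_add_one_mul_comp_add_one (v w : ZMod N → ℝ) :
    ∑ j, v (j + 1) * w (j + 1) = ∑ j, v j * w j :=
  Equiv.sum_comp (Equiv.addRight (1 : ZMod N)) fun j => v j * w j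

lemma sum_latLap_mul (v w : ZMod N → ℝ) :
    ∑ j, latLap ε v j * w j = ∑ j, v j * latLap ε w j := by
  simp only [latLap, div_mul_eq_mul_div, mul_div_assoc', ← sum_div]
  congr 1
  simp only [add_mul, sub_mul, mul_add, mul_sub, sum_add_distrib, sum_sub_distrib, mul_assoc,
    mul_left_comm (v _) 2, ← mul_sum, sum_comp_add_one_mul, sum_comp_sub_one_mul]
  ring

lemma sum_latDplus_mul_latDplus (v w : ZMod N → ℝ) :
    ∑ j, latDplus ε v j * latDplus ε w j = -∑ j, latLap ε v j * w j := by
  have hterm (j : ZMod N) : latDplus ε v j * latDplus ε w j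
      = (v (j + 1) - v j) * (w (j + 1) - w j) / ε ^ 2 := by
    simp only [latDplus]; ring
  simp only [hterm, latLap, div_mul_eq_mul_div, ← sum_div, ← neg_div]
  congr 1
  simp only [add_mul, sub_mul, mul_sub, sum_add_distrib, sum_sub_distrib, mul_assoc, ← mul_sum,
    sum_comp_add_one_mul_comp_add_one, sum_comp_sub_one_mul]
  ring

lemma sum_iterate_latLap_mul (m : ℕ) (v w : ZMod N → ℝ) :
    ∑ j, (latLap ε)^[m] v j * w j = ∑ j, v j * (latLap ε)^[m] w j := by
  induction m generalizing v w with
  | zero => rfl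
  | succ m ih =>
    rw [Function.iterate_succ_apply', sum_latLap_mul, ih, Function.iterate_succ_apply]

lemma sum_latD_mul_latD (α : ℕ) (v w : ZMod N → ℝ) :
    ∑ j, latD ε α v j * latD ε α w j = (-1) ^ α * ∑ j, (latLap ε)^[α] v j * w j := by
  obtain ⟨m, rfl | rfl⟩ := Nat.even_or_odd' α
  · rw [latD_two_mul, latD_two_mul, (even_two_mul m).neg_one_pow, one_mul, two_mul,
      Function.iterate_add_apply, sum_iterate_latLap_mul ε m ((latLap ε)^[m] v)]
  · rw [latD_two_mul_add_one, latD_two_mul_add_one, sum_latDplus_mul_latDplus,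
      (odd_two_mul_add_one m).neg_one_pow, ← Function.iterate_succ_apply' (latLap ε),
      ← sum_iterate_latLap_mul ε m, ← Function.iterate_add_apply, neg_one_mul,
      Nat.succ_eq_add_one, show m + (m + 1) = 2 * m + 1 by omega]

end SummationByParts

lemma LinearMap.hasDerivAt_apply_update {𝕜 ι κ : Type*} [NontriviallyNormedField 𝕜]
    [CompleteSpace 𝕜] [Fintype ι] [DecidableEq ι] [Fintype κ]
    (L : (ι → 𝕜) →ₗ[𝕜] (κ → 𝕜)) (u : ι → 𝕜) (i : ι) (j : κ) (s : 𝕜) :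
    HasDerivAt (fun s => L (Function.update u i s) j) (L (Pi.single i 1) j) s :=
  hasDerivAt_pi.1 (L.toContinuousLinearMap.hasFDerivAt.comp_hasDerivAt s
    (hasDerivAt_update u i s)) j

lemma Upot_eq (n : ℕ) (A : ℕ → ℝ) (ε : ℝ) {N : ℕ} [NeZero N] (u : ZMod N → ℝ) :
    Upot n A ε u = ε / 2 * ∑ α ∈ range (n + 1), A α * ∑ j, latD ε α u j ^ 2 := by
  simp only [Upot, mul_sum]
  rw [sum_comm]
  refine sum_congr rfl fun α _ => sum_congr rfl fun j _ => ?_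
  ring

lemma hasDerivAt_Upot_update (n : ℕ) (A : ℕ → ℝ) (ε : ℝ) {N : ℕ} [NeZero N]
    (u : ZMod N → ℝ) (i : ZMod N) (s : ℝ) :
    HasDerivAt (fun s => Upot n A ε (Function.update u i s))
      (ε * ∑ α ∈ range (n + 1),
        A α * ∑ j, latD ε α (Function.update u i s) j * latD ε α (Pi.single i 1) j) s := by
  simp only [Upot_eq]
  have hsq (α : ℕ) (j : ZMod N) : HasDerivAt (fun s => latD ε α (Function.update u i s) j ^ 2)
      (2 * latD ε α (Function.update u i s) j * latD ε α (Pi.single i 1) j) s := by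
    simpa using ((latDₗ ε α).hasDerivAt_apply_update u i j s).fun_pow 2
  refine ((HasDerivAt.fun_sum (u := range (n + 1)) fun α _ =>
    (HasDerivAt.fun_sum (u := univ) fun j _ => hsq α j).const_mul (A α)).const_mul (ε / 2)
    ).congr_deriv ?_
  simp only [mul_sum]
  refine sum_congr rfl fun α _ => sum_congr rfl fun j _ => ?_
  ring

theorem quadratic_force_formula_general
    (n : ℕ) (A : ℕ → ℝ) (N : ℕ) [NeZero N] (ε : ℝ) (hε : 0 < ε)
    (u : ZMod N → ℝ) (i : ZMod N) :
    -(1 / ε) * deriv (fun s : ℝ => Upot n A ε (Function.update u i s)) (u i)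
      = - ∑ k ∈ Finset.range (n + 1), (-1 : ℝ) ^ k * A k * ((latLap ε)^[k] u i) := by
  have hpair (α : ℕ) :
      ∑ j, latD ε α u j * latD ε α (Pi.single i 1) j = (-1) ^ α * (latLap ε)^[α] u i := by
    simp [sum_latD_mul_latD, Pi.single_apply]
  rw [(hasDerivAt_Upot_update n A ε u i (u i)).deriv, Function.update_eq_self]
  simp only [hpair]
  field_simp
  exact congrArg _ (sum_congr rfl fun k _ => by ring)

/-- **Force formula for the quadratic discrete potential.**
The force on particle `i`, `F_i = -(1/ε) ∂U/∂u_i`, equals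
`-Σ_{k=0}^n (-1)^k A_k (Δ_ε^k u)_i`. -/
theorem quadratic_force_formula
    (n : ℕ) (hn : 1 ≤ n) (A : ℕ → ℝ) (N : ℕ) [NeZero N] (ε : ℝ) (hε : 0 < ε)
    (u : ZMod N → ℝ) (i : ZMod N) :
    -(1 / ε) * deriv (fun s : ℝ => Upot n A ε (Function.update u i s)) (u i)
      = - ∑ k ∈ Finset.range (n + 1), (-1 : ℝ) ^ k * A k * ((latLap ε)^[k] u i) :=
  quadratic_force_formula_general n A N ε hε u i

end
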